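/- Let (X_i, Z_i), i = 1, …, n, be independent and identically distributed pairs, where each X_i is H-valued with E‖X₁‖⁴ < ∞ and each Z_i is ℝᵖ-valued with E‖Z₁‖² < ∞; fix h ∈ H and x ∈ ℝ. With X̄_{x,h} := n⁻¹ Σ_{j=1}^n 1{⟨X_j,h⟩ ≤ x} X_j and E_{x,h} := E[1{⟨X₁,h⟩ ≤ x} X₁], one has E‖ n⁻¹ Σ_{i=1}^n ⟨X_i, X̄_{x,h} − E_{x,h}⟩ Z_i ‖ ≤ ( (2/n²) E‖X₁‖⁴ + ((4n−2)/n²) (E‖X₁‖²)² )^{1/2} · (E‖Z₁‖²)^{1/2}. In particular, this expectation tends to 0 as n → ∞, so n⁻¹ Σ_{i=1}^n ⟨X_i, X̄_{x,h} − E_{x,h}⟩ Z_i converges to 0 in probability. -/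

import Mathlib

/-!
Write `Y_j = 1{⟨X_j,h⟩ ≤ x} X_j - E_{x,h}`, so that `D = X̄_{x,h} - E_{x,h}` is the average of the
centred i.i.d. vectors `Y_j`. By Cauchy–Schwarz, the expectation of the norm is at most the
largest `√(E⟨X_i,D⟩²) · √(E‖Z₁‖²)`, and `E⟨X_i,D⟩² ≤ E ‖X_i‖²‖D‖² = n⁻² ∑_{j,k} E ‖X_i‖²⟨Y_j,Y_k⟩`.
For `j ≠ k` one of `Y_j`, `Y_k` is independent of the two other factors and centred, so only the
`n` diagonal terms survive. The term `j = i` is at most `2E‖X₁‖⁴ + 2(E‖X₁‖²)²`; for `j ≠ i` it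
factors by independence and is at most `4(E‖X₁‖²)²`. The bound is `O(n^{-1/2})`, and convergence
in `L¹` implies convergence in probability.
-/

open MeasureTheory ProbabilityTheory Filter
open scoped RealInnerProductSpace Topology

/-- The random vector `n⁻¹ ∑_{i<n} ⟨X_i, X̄_{x,h} − E_{x,h}⟩ Z_i` from Lemma 5 of the
paper, where `X̄_{x,h} = n⁻¹ ∑_{j<n} 1{⟨X_j,h⟩ ≤ x} X_j` and
`E_{x,h} = E[1{⟨X₁,h⟩ ≤ x} X₁]`. -/
noncomputable def crossTerm {Ω : Type*} [MeasureSpace Ω]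
    {H : Type*} [NormedAddCommGroup H] [InnerProductSpace ℝ H] [CompleteSpace H]
    {p : ℕ} (X : ℕ → Ω → H) (Z : ℕ → Ω → EuclideanSpace ℝ (Fin p))
    (h : H) (x : ℝ) (n : ℕ) (ω : Ω) : EuclideanSpace ℝ (Fin p) :=
  (n : ℝ)⁻¹ • ∑ i ∈ Finset.range n,
    ⟪X i ω, ((n : ℝ)⁻¹ • ∑ j ∈ Finset.range n, (if ⟪X j ω, h⟫ ≤ x then X j ω else 0))
        - ∫ ω', (if ⟪X 0 ω', h⟫ ≤ x then X 0 ω' else 0) ∂ℙ⟫ • Z i ω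

section General

variable {α : Type*} [MeasurableSpace α] {μ : Measure α}

theorem integral_norm_mul_norm_le_sqrt_mul_sqrt {E F : Type*} [NormedAddCommGroup E]
    [NormedAddCommGroup F] {f : α → E} {g : α → F} (hf : MemLp f 2 μ) (hg : MemLp g 2 μ) :
    ∫ a, ‖f a‖ * ‖g a‖ ∂μ ≤ √(∫ a, ‖f a‖ ^ 2 ∂μ) * √(∫ a, ‖g a‖ ^ 2 ∂μ) := by
  have := integral_mul_le_Lp_mul_Lq_of_nonneg Real.HolderConjugate.two_two
    (ae_of_all μ fun a => norm_nonneg (f a)) (ae_of_all μ fun a => norm_nonneg (g a))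
    (by simpa using hf.norm) (by simpa using hg.norm)
  simpa [Real.sqrt_eq_rpow] using this

theorem sq_norm_integral_le_integral_sq_norm [IsProbabilityMeasure μ] {E : Type*}
    [NormedAddCommGroup E] [NormedSpace ℝ E] {f : α → E} (hf : MemLp f 2 μ) :
    ‖∫ a, f a ∂μ‖ ^ 2 ≤ ∫ a, ‖f a‖ ^ 2 ∂μ := by
  have hvar := variance_eq_sub hf.norm
  have hsq : (∫ a, ‖f a‖ ∂μ) ^ 2 ≤ ∫ a, ‖f a‖ ^ 2 ∂μ := by
    have := variance_nonneg (fun a => ‖f a‖) μ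
    simp only [hvar, Pi.pow_apply] at this
    linarith
  exact (pow_le_pow_left₀ (norm_nonneg _) (norm_integral_le_integral_norm f) 2).trans hsq

/-- Pointwise AM-GM, `a²bc ≤ a⁴/2 + b⁴/4 + c⁴/4`, dominates the function by fourth powers. -/
theorem integrable_of_norm_le_sq_mul_mul {E F G K : Type*} [NormedAddCommGroup E]
    [NormedAddCommGroup F] [NormedAddCommGroup G] [NormedAddCommGroup K]
    {U : α → E} {V : α → F} {W : α → G} {f : α → K}
    (hU : MemLp U 4 μ) (hV : MemLp V 4 μ) (hW : MemLp W 4 μ) (hf : AEStronglyMeasurable f μ)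
    (hle : ∀ a, ‖f a‖ ≤ ‖U a‖ ^ 2 * (‖V a‖ * ‖W a‖)) : Integrable f μ := by
  refine ((hU.integrable_norm_pow (by norm_num)).div_const 2 |>.add
    (((hV.integrable_norm_pow (by norm_num)).add
      (hW.integrable_norm_pow (by norm_num))).div_const 4)).mono' hf
    (ae_of_all μ fun a => (hle a).trans ?_)
  simp only [Pi.add_apply]
  nlinarith [sq_nonneg (‖U a‖ ^ 2 - ‖V a‖ * ‖W a‖), sq_nonneg (‖V a‖ ^ 2 - ‖W a‖ ^ 2)]

theorem real_inner_sq_le_norm_sq_mul_norm_sq {H : Type*} [NormedAddCommGroup H]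
    [InnerProductSpace ℝ H] (x y : H) : ⟪x, y⟫ ^ 2 ≤ ‖x‖ ^ 2 * ‖y‖ ^ 2 := by
  simpa only [sq, real_inner_self_eq_norm_mul_norm] using real_inner_mul_inner_self_le x y

theorem integral_mul_norm_sq_sum_of_orthogonal {H ι : Type*} [NormedAddCommGroup H]
    [InnerProductSpace ℝ H] (s : Finset ι) {w : α → ℝ} {Y : ι → α → H}
    (hint : ∀ j ∈ s, ∀ k ∈ s, Integrable (fun a => w a * ⟪Y j a, Y k a⟫) μ)
    (horth : ∀ j ∈ s, ∀ k ∈ s, j ≠ k → ∫ a, w a * ⟪Y j a, Y k a⟫ ∂μ = 0) :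
    ∫ a, w a * ‖∑ j ∈ s, Y j a‖ ^ 2 ∂μ = ∑ j ∈ s, ∫ a, w a * ‖Y j a‖ ^ 2 ∂μ := by
  have hexp : ∀ a, w a * ‖∑ j ∈ s, Y j a‖ ^ 2 = ∑ j ∈ s, ∑ k ∈ s, w a * ⟪Y j a, Y k a⟫ := by
    intro a
    simp_rw [← real_inner_self_eq_norm_sq, sum_inner, inner_sum, Finset.mul_sum]
  simp_rw [hexp]
  rw [integral_finsetSum _ fun j hj => integrable_finsetSum _ fun k hk => hint j hj k hk]
  refine Finset.sum_congr rfl fun j hj => ?_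
  rw [integral_finsetSum _ fun k hk => hint j hj k hk,
    Finset.sum_eq_single_of_mem j hj fun k hk hkj => horth j hj k hk hkj.symm]
  simp_rw [real_inner_self_eq_norm_sq]

theorem ProbabilityTheory.iIndepFun.integral_inner_eq_zero {ι S H : Type*} [MeasurableSpace S]
    [NormedAddCommGroup H] [InnerProductSpace ℝ H] [CompleteSpace H] [MeasurableSpace H]
    [BorelSpace H] {X : ι → α → S} (hX : iIndepFun X μ) (hXm : ∀ i, Measurable (X i))
    {i j k : ι} (hik : i ≠ k) (hjk : j ≠ k) {u : S × S → H} {g : S → H}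
    (hu : Measurable u) (hg : Measurable g) (hui : Integrable (fun a => u (X i a, X j a)) μ)
    (hgi : Integrable (fun a => g (X k a)) μ) (hg0 : ∫ a, g (X k a) ∂μ = 0) :
    ∫ a, ⟪u (X i a, X j a), g (X k a)⟫ ∂μ = 0 := by
  have hind : IndepFun (fun a => u (X i a, X j a)) (fun a => g (X k a)) μ :=
    (hX.indepFun_prodMk hXm i j k hik hjk).comp hu hg
  calc ∫ a, ⟪u (X i a, X j a), g (X k a)⟫ ∂μ
      = ⟪∫ a, u (X i a, X j a) ∂μ, ∫ a, g (X k a) ∂μ⟫ := hind.integral_bilin hui hgi (innerSL ℝ)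
    _ = 0 := by rw [hg0, inner_zero_right]

theorem integrable_inv_smul_sum_smul {E : Type*} [NormedAddCommGroup E] [NormedSpace ℝ E]
    {f : ℕ → α → ℝ} {Z : ℕ → α → E} {n : ℕ} (hf : ∀ i < n, MemLp (f i) 2 μ)
    (hZ : ∀ i < n, MemLp (Z i) 2 μ) :
    Integrable (fun a => (n : ℝ)⁻¹ • ∑ i ∈ Finset.range n, f i a • Z i a) μ := by
  refine (integrable_finsetSum _ fun i hi => ?_).smul _
  rw [Finset.mem_range] at hi
  exact memLp_one_iff_integrable.1 ((hZ i hi).smul (hf i hi))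

theorem integral_norm_inv_smul_sum_smul_le {E : Type*} [NormedAddCommGroup E] [NormedSpace ℝ E]
    {f : ℕ → α → ℝ} {Z : ℕ → α → E} {n : ℕ} {B C : ℝ} (hf : ∀ i < n, MemLp (f i) 2 μ)
    (hZ : ∀ i < n, MemLp (Z i) 2 μ) (hfB : ∀ i < n, ∫ a, f i a ^ 2 ∂μ ≤ B)
    (hZC : ∀ i < n, ∫ a, ‖Z i a‖ ^ 2 ∂μ ≤ C) :
    ∫ a, ‖(n : ℝ)⁻¹ • ∑ i ∈ Finset.range n, f i a • Z i a‖ ∂μ ≤ √B * √C := by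
  have hint : ∀ i ∈ Finset.range n, Integrable (fun a => ‖f i a‖ * ‖Z i a‖) μ := fun i hi =>
    (hf i (Finset.mem_range.1 hi)).norm.integrable_mul (hZ i (Finset.mem_range.1 hi)).norm
  have hCS : ∀ i ∈ Finset.range n, ∫ a, ‖f i a‖ * ‖Z i a‖ ∂μ ≤ √B * √C := by
    intro i hi
    rw [Finset.mem_range] at hi
    refine (integral_norm_mul_norm_le_sqrt_mul_sqrt (hf i hi) (hZ i hi)).trans ?_
    gcongr
    · simpa only [Real.norm_eq_abs, sq_abs] using hfB i hi
    · exact hZC i hi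
  calc ∫ a, ‖(n : ℝ)⁻¹ • ∑ i ∈ Finset.range n, f i a • Z i a‖ ∂μ
      ≤ ∫ a, (n : ℝ)⁻¹ * ∑ i ∈ Finset.range n, ‖f i a‖ * ‖Z i a‖ ∂μ := by
        refine integral_mono_of_nonneg (ae_of_all μ fun a => norm_nonneg _)
          ((integrable_finsetSum _ hint).const_mul _) (ae_of_all μ fun a => ?_)
        dsimp only
        rw [norm_smul, Real.norm_of_nonneg (by positivity)]
        gcongr
        exact (norm_sum_le _ _).trans_eq (by simp_rw [norm_smul])
    _ = (n : ℝ)⁻¹ * ∑ i ∈ Finset.range n, ∫ a, ‖f i a‖ * ‖Z i a‖ ∂μ := by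
        rw [integral_const_mul, integral_finsetSum _ hint]
    _ ≤ (n : ℝ)⁻¹ * ∑ _i ∈ Finset.range n, √B * √C := by gcongr with i hi; exact hCS i hi
    _ ≤ √B * √C := by
        rw [Finset.sum_const, Finset.card_range, nsmul_eq_mul, ← mul_assoc]
        rcases Nat.eq_zero_or_pos n with rfl | hn
        · simp only [CharP.cast_eq_zero, inv_zero, zero_mul]
          positivity
        · rw [inv_mul_cancel₀ (by positivity), one_mul]

theorem tendstoInMeasure_zero_of_tendsto_integral_norm {ι E : Type*} [NormedAddCommGroup E]
    {l : Filter ι} {f : ι → α → E} (hf : ∀ n, Integrable (f n) μ)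
    (hlim : Tendsto (fun n => ∫ a, ‖f n a‖ ∂μ) l (𝓝 0)) : TendstoInMeasure μ f l 0 := by
  refine tendstoInMeasure_of_tendsto_eLpNorm one_ne_zero (fun n => (hf n).aestronglyMeasurable)
    aestronglyMeasurable_const ?_
  have heq : ∀ n, eLpNorm (f n) 1 μ = ENNReal.ofReal (∫ a, ‖f n a‖ ∂μ) := fun n => by
    rw [eLpNorm_one_eq_lintegral_enorm, ofReal_integral_norm_eq_lintegral_enorm (hf n)]
  simp_rw [sub_zero, heq]
  simpa using ENNReal.tendsto_ofReal hlim

theorem tendsto_two_div_sq_mul_add_four_mul_sub_two_div_sq_mul (a b : ℝ) :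
    Tendsto (fun n : ℕ => 2 / (n : ℝ) ^ 2 * a + (4 * n - 2) / (n : ℝ) ^ 2 * b) atTop (𝓝 0) := by
  have hinv : Tendsto (fun n : ℕ => (n : ℝ)⁻¹) atTop (𝓝 0) :=
    tendsto_inv_atTop_zero.comp tendsto_natCast_atTop_atTop
  have := ((hinv.pow 2).const_mul (2 * a - 2 * b)).add (hinv.const_mul (4 * b))
  rw [zero_pow two_ne_zero, mul_zero, mul_zero, add_zero] at this
  refine this.congr' ?_
  filter_upwards [eventually_ne_atTop 0] with n hn
  field_simp
  ring

theorem memLp_comp_of_norm_le {E F : Type*} [NormedAddCommGroup E] [MeasurableSpace E]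
    [BorelSpace E] [NormedAddCommGroup F] [MeasurableSpace F] [OpensMeasurableSpace F]
    [SecondCountableTopology F] {X : ℕ → α → E} {φ : E → F} {p : ENNReal}
    (hXm : ∀ i, Measurable (X i)) (hid : ∀ i, IdentDistrib (X i) (X 0) μ μ)
    (hX : MemLp (X 0) p μ) (hφm : Measurable φ) (hφ : ∀ v, ‖φ v‖ ≤ ‖v‖) (j : ℕ) :
    MemLp (fun a => φ (X j a)) p μ :=
  ((hid j).memLp_iff.2 hX).of_le (hφm.comp (hXm j)).aestronglyMeasurable
    (ae_of_all μ fun a => hφ (X j a))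

end General

section Centering

variable {Ω H : Type*} [MeasurableSpace Ω] [NormedAddCommGroup H] [NormedSpace ℝ H]

noncomputable def centered (μ : Measure Ω) (φ : H → H) (X : ℕ → Ω → H) (j : ℕ) (ω : Ω) : H :=
  φ (X j ω) - ∫ ω', φ (X 0 ω') ∂μ

/-- For `φ` the indicator of the half-space `{v | ⟪v, h⟫ ≤ x}` this is `X̄_{x,h} - E_{x,h}`. -/
noncomputable def meanDeviation (μ : Measure Ω) (φ : H → H) (X : ℕ → Ω → H) (n : ℕ) (ω : Ω) :
    H :=
  (n : ℝ)⁻¹ • ∑ j ∈ Finset.range n, φ (X j ω) - ∫ ω', φ (X 0 ω') ∂μ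

variable {μ : Measure Ω} {φ : H → H} {X : ℕ → Ω → H}

theorem meanDeviation_eq_smul_sum_centered {n : ℕ} (hn : n ≠ 0) (ω : Ω) :
    meanDeviation μ φ X n ω = (n : ℝ)⁻¹ • ∑ j ∈ Finset.range n, centered μ φ X j ω := by
  simp only [meanDeviation, centered]
  rw [Finset.sum_sub_distrib, smul_sub, Finset.sum_const, Finset.card_range,
    ← Nat.cast_smul_eq_nsmul ℝ, smul_smul, inv_mul_cancel₀ (by positivity), one_smul]

theorem norm_centered_sq_le (hφ : ∀ v, ‖φ v‖ ≤ ‖v‖) (j : ℕ) (ω : Ω) :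
    ‖centered μ φ X j ω‖ ^ 2 ≤ 2 * ‖X j ω‖ ^ 2 + 2 * ‖∫ ω', φ (X 0 ω') ∂μ‖ ^ 2 := by
  have h : ‖centered μ φ X j ω‖ ≤ ‖X j ω‖ + ‖∫ ω', φ (X 0 ω') ∂μ‖ :=
    (norm_sub_le _ _).trans (add_le_add_left (hφ (X j ω)) _)
  exact (pow_le_pow_left₀ (norm_nonneg _) h 2).trans (add_sq_le.trans_eq (mul_add _ _ _))

variable [MeasurableSpace H] [BorelSpace H] [SecondCountableTopology H]

theorem memLp_centered [IsFiniteMeasure μ] {p : ENNReal} (hXm : ∀ i, Measurable (X i))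
    (hid : ∀ i, IdentDistrib (X i) (X 0) μ μ) (hX : MemLp (X 0) p μ) (hφm : Measurable φ)
    (hφ : ∀ v, ‖φ v‖ ≤ ‖v‖) (j : ℕ) : MemLp (centered μ φ X j) p μ :=
  (memLp_comp_of_norm_le hXm hid hX hφm hφ j).sub (memLp_const _)

theorem memLp_meanDeviation [IsFiniteMeasure μ] {p : ENNReal} (hXm : ∀ i, Measurable (X i))
    (hid : ∀ i, IdentDistrib (X i) (X 0) μ μ) (hX : MemLp (X 0) p μ) (hφm : Measurable φ)
    (hφ : ∀ v, ‖φ v‖ ≤ ‖v‖) (n : ℕ) : MemLp (meanDeviation μ φ X n) p μ :=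
  ((memLp_finsetSum _ fun j _ => memLp_comp_of_norm_le hXm hid hX hφm hφ j).const_smul _).sub
    (memLp_const _)

theorem integral_centered [CompleteSpace H] [IsProbabilityMeasure μ]
    (hXm : ∀ i, Measurable (X i)) (hid : ∀ i, IdentDistrib (X i) (X 0) μ μ)
    (hX : Integrable (X 0) μ) (hφm : Measurable φ)
    (hφ : ∀ v, ‖φ v‖ ≤ ‖v‖) (j : ℕ) : ∫ ω, centered μ φ X j ω ∂μ = 0 := by
  have hφX := memLp_comp_of_norm_le hXm hid (memLp_one_iff_integrable.2 hX) hφm hφ j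
  simp only [centered]
  rw [integral_sub (memLp_one_iff_integrable.1 hφX) (integrable_const _),
    show ∫ ω, φ (X j ω) ∂μ = ∫ ω, φ (X 0 ω) ∂μ from ((hid j).comp hφm).integral_eq,
    integral_const, probReal_univ, one_smul]
  exact sub_self _

theorem sq_norm_integral_comp_le [IsProbabilityMeasure μ] (hXm : Measurable (X 0))
    (hX : MemLp (X 0) 2 μ) (hφm : Measurable φ) (hφ : ∀ v, ‖φ v‖ ≤ ‖v‖) :
    ‖∫ ω, φ (X 0 ω) ∂μ‖ ^ 2 ≤ ∫ ω, ‖X 0 ω‖ ^ 2 ∂μ := by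
  have hφX : MemLp (fun ω => φ (X 0 ω)) 2 μ :=
    hX.of_le (hφm.comp hXm).aestronglyMeasurable (ae_of_all μ fun ω => hφ (X 0 ω))
  refine (sq_norm_integral_le_integral_sq_norm hφX).trans (integral_mono_of_nonneg
    (ae_of_all μ fun ω => by positivity) (hX.integrable_norm_pow (by norm_num))
    (ae_of_all μ fun ω => ?_))
  exact pow_le_pow_left₀ (norm_nonneg _) (hφ _) 2

theorem integral_norm_centered_sq_le [IsProbabilityMeasure μ] (hXm : ∀ i, Measurable (X i))
    (hid : ∀ i, IdentDistrib (X i) (X 0) μ μ) (hX : MemLp (X 0) 2 μ) (hφm : Measurable φ)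
    (hφ : ∀ v, ‖φ v‖ ≤ ‖v‖) (j : ℕ) :
    ∫ ω, ‖centered μ φ X j ω‖ ^ 2 ∂μ ≤ 4 * ∫ ω, ‖X 0 ω‖ ^ 2 ∂μ := by
  have hXj : Integrable (fun ω => ‖X j ω‖ ^ 2) μ :=
    ((hid j).memLp_iff.2 hX).integrable_norm_pow (by norm_num)
  have hm := sq_norm_integral_comp_le (hXm 0) hX hφm hφ
  calc ∫ ω, ‖centered μ φ X j ω‖ ^ 2 ∂μ
      ≤ ∫ ω, (2 * ‖X j ω‖ ^ 2 + 2 * ‖∫ ω', φ (X 0 ω') ∂μ‖ ^ 2) ∂μ :=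
        integral_mono_of_nonneg (ae_of_all μ fun ω => by positivity)
          ((hXj.const_mul 2).add (integrable_const _))
          (ae_of_all μ (norm_centered_sq_le hφ j))
    _ = 2 * ∫ ω, ‖X 0 ω‖ ^ 2 ∂μ + 2 * ‖∫ ω', φ (X 0 ω') ∂μ‖ ^ 2 := by
        rw [integral_add (hXj.const_mul 2) (integrable_const _), integral_const_mul,
          (hid j).norm.pow.integral_eq, integral_const, probReal_univ, one_smul]
    _ ≤ 4 * ∫ ω, ‖X 0 ω‖ ^ 2 ∂μ := by linarith

theorem integral_norm_sq_mul_norm_centered_sq_self_le [IsProbabilityMeasure μ]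
    (hXm : ∀ i, Measurable (X i)) (hid : ∀ i, IdentDistrib (X i) (X 0) μ μ)
    (hX : MemLp (X 0) 4 μ) (hφm : Measurable φ) (hφ : ∀ v, ‖φ v‖ ≤ ‖v‖) (i : ℕ) :
    ∫ ω, ‖X i ω‖ ^ 2 * ‖centered μ φ X i ω‖ ^ 2 ∂μ
      ≤ 2 * ∫ ω, ‖X 0 ω‖ ^ 4 ∂μ + 2 * (∫ ω, ‖X 0 ω‖ ^ 2 ∂μ) ^ 2 := by
  set c := ‖∫ ω', φ (X 0 ω') ∂μ‖
  have hX2 : MemLp (X 0) 2 μ := hX.mono_exponent (by norm_num)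
  have hXi4 : Integrable (fun ω => ‖X i ω‖ ^ 4) μ :=
    ((hid i).memLp_iff.2 hX).integrable_norm_pow (by norm_num)
  have hXi2 : Integrable (fun ω => ‖X i ω‖ ^ 2) μ :=
    ((hid i).memLp_iff.2 hX2).integrable_norm_pow (by norm_num)
  have hc : c ^ 2 ≤ ∫ ω, ‖X 0 ω‖ ^ 2 ∂μ := sq_norm_integral_comp_le (hXm 0) hX2 hφm hφ
  have hE2 : 0 ≤ ∫ ω, ‖X 0 ω‖ ^ 2 ∂μ := integral_nonneg fun ω => by positivity
  calc ∫ ω, ‖X i ω‖ ^ 2 * ‖centered μ φ X i ω‖ ^ 2 ∂μ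
      ≤ ∫ ω, (2 * ‖X i ω‖ ^ 4 + 2 * c ^ 2 * ‖X i ω‖ ^ 2) ∂μ := by
        refine integral_mono_of_nonneg (ae_of_all μ fun ω => by positivity)
          ((hXi4.const_mul 2).add (hXi2.const_mul _)) (ae_of_all μ fun ω => ?_)
        have := mul_le_mul_of_nonneg_left (norm_centered_sq_le (μ := μ) (X := X) hφ i ω)
          (sq_nonneg ‖X i ω‖)
        dsimp only
        linarith
    _ = 2 * ∫ ω, ‖X 0 ω‖ ^ 4 ∂μ + 2 * c ^ 2 * ∫ ω, ‖X 0 ω‖ ^ 2 ∂μ := by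
        rw [integral_add (hXi4.const_mul 2) (hXi2.const_mul _), integral_const_mul,
          integral_const_mul, (hid i).norm.pow.integral_eq, (hid i).norm.pow.integral_eq]
    _ ≤ 2 * ∫ ω, ‖X 0 ω‖ ^ 4 ∂μ + 2 * (∫ ω, ‖X 0 ω‖ ^ 2 ∂μ) ^ 2 := by nlinarith

theorem integral_norm_sq_mul_norm_centered_sq_le_of_ne [IsProbabilityMeasure μ]
    (hXm : ∀ i, Measurable (X i)) (hind : iIndepFun X μ)
    (hid : ∀ i, IdentDistrib (X i) (X 0) μ μ) (hX : MemLp (X 0) 2 μ) (hφm : Measurable φ)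
    (hφ : ∀ v, ‖φ v‖ ≤ ‖v‖) {i j : ℕ} (hij : i ≠ j) :
    ∫ ω, ‖X i ω‖ ^ 2 * ‖centered μ φ X j ω‖ ^ 2 ∂μ ≤ 4 * (∫ ω, ‖X 0 ω‖ ^ 2 ∂μ) ^ 2 := by
  have hindep : IndepFun (fun ω => ‖X i ω‖ ^ 2) (fun ω => ‖centered μ φ X j ω‖ ^ 2) μ :=
    (hind.indepFun hij).comp (measurable_norm.pow_const 2)
      ((hφm.sub_const _).norm.pow_const 2)
  have hE2 : 0 ≤ ∫ ω, ‖X 0 ω‖ ^ 2 ∂μ := integral_nonneg fun ω => by positivity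
  rw [hindep.integral_fun_mul_eq_mul_integral ((hXm i).norm.pow_const 2).aestronglyMeasurable
    ((memLp_centered hXm hid hX hφm hφ j).1.norm.pow 2), (hid i).norm.pow.integral_eq, sq,
    mul_left_comm]
  exact mul_le_mul_of_nonneg_left (integral_norm_centered_sq_le hXm hid hX hφm hφ j) hE2

theorem sum_integral_norm_sq_mul_norm_centered_sq_le [IsProbabilityMeasure μ]
    (hXm : ∀ i, Measurable (X i)) (hind : iIndepFun X μ)
    (hid : ∀ i, IdentDistrib (X i) (X 0) μ μ) (hX : MemLp (X 0) 4 μ) (hφm : Measurable φ)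
    (hφ : ∀ v, ‖φ v‖ ≤ ‖v‖) {n i : ℕ} (hi : i < n) :
    ∑ j ∈ Finset.range n, ∫ ω, ‖X i ω‖ ^ 2 * ‖centered μ φ X j ω‖ ^ 2 ∂μ
      ≤ 2 * ∫ ω, ‖X 0 ω‖ ^ 4 ∂μ + (4 * n - 2) * (∫ ω, ‖X 0 ω‖ ^ 2 ∂μ) ^ 2 := by
  have hoff := Finset.sum_le_card_nsmul ((Finset.range n).erase i) _ _ fun j hj =>
    integral_norm_sq_mul_norm_centered_sq_le_of_ne hXm hind hid (hX.mono_exponent (by norm_num))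
      hφm hφ (Finset.ne_of_mem_erase hj).symm
  rw [Finset.card_erase_of_mem (Finset.mem_range.2 hi), Finset.card_range, nsmul_eq_mul,
    Nat.cast_pred (by omega)] at hoff
  rw [← Finset.add_sum_erase _ _ (Finset.mem_range.2 hi)]
  have hdiag := integral_norm_sq_mul_norm_centered_sq_self_le hXm hid hX hφm hφ i
  linarith

end Centering

section SecondMoment

variable {Ω H : Type*} [MeasurableSpace Ω] [NormedAddCommGroup H] [InnerProductSpace ℝ H]
  [MeasurableSpace H] [BorelSpace H] [SecondCountableTopology H]
  {μ : Measure Ω} [IsProbabilityMeasure μ] {φ : H → H} {X : ℕ → Ω → H}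

theorem memLp_inner_meanDeviation (hXm : ∀ i, Measurable (X i))
    (hid : ∀ i, IdentDistrib (X i) (X 0) μ μ) (hX : MemLp (X 0) 4 μ) (hφm : Measurable φ)
    (hφ : ∀ v, ‖φ v‖ ≤ ‖v‖) (i n : ℕ) :
    MemLp (fun ω => ⟪X i ω, meanDeviation μ φ X n ω⟫) 2 μ := by
  have hXi : MemLp (X i) 4 μ := (hid i).memLp_iff.2 hX
  have hD := memLp_meanDeviation hXm hid hX hφm hφ n
  have hm : AEStronglyMeasurable (fun ω => ⟪X i ω, meanDeviation μ φ X n ω⟫) μ :=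
    hXi.1.inner hD.1
  refine (memLp_two_iff_integrable_sq hm).2
    (integrable_of_norm_le_sq_mul_mul hXi hD hD (hm.pow 2) fun ω => ?_)
  rw [norm_pow, Real.norm_eq_abs, sq_abs, ← sq]
  exact real_inner_sq_le_norm_sq_mul_norm_sq _ _

variable [CompleteSpace H]

theorem integral_norm_sq_mul_inner_centered_eq_zero (hXm : ∀ i, Measurable (X i))
    (hind : iIndepFun X μ) (hid : ∀ i, IdentDistrib (X i) (X 0) μ μ) (hX : MemLp (X 0) 4 μ)
    (hφm : Measurable φ) (hφ : ∀ v, ‖φ v‖ ≤ ‖v‖) (i : ℕ) {j k : ℕ} (hjk : j ≠ k) :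
    ∫ ω, ‖X i ω‖ ^ 2 * ⟪centered μ φ X j ω, centered μ φ X k ω⟫ ∂μ = 0 := by
  set m := ∫ ω, φ (X 0 ω) ∂μ
  have hY : ∀ j, MemLp (centered μ φ X j) 4 μ := memLp_centered hXm hid hX hφm hφ
  have hgm : Measurable fun v => φ v - m := hφm.sub_const m
  have key : ∀ {j k}, j ≠ k → k ≠ i →
      ∫ ω, ‖X i ω‖ ^ 2 * ⟪centered μ φ X j ω, centered μ φ X k ω⟫ ∂μ = 0 := by
    intro j k hjk hki
    have hui : Integrable (fun ω => ‖X i ω‖ ^ 2 • centered μ φ X j ω) μ :=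
      integrable_of_norm_le_sq_mul_mul ((hid i).memLp_iff.2 hX) (hY j) (memLp_const (1 : ℝ))
        (((hXm i).norm.pow_const 2).smul (hgm.comp (hXm j))).aestronglyMeasurable
        fun ω => by rw [norm_smul, norm_pow, norm_norm, norm_one, mul_one]
    have : ∫ ω, ⟪‖X i ω‖ ^ 2 • centered μ φ X j ω, centered μ φ X k ω⟫ ∂μ = 0 :=
      hind.integral_inner_eq_zero hXm (Ne.symm hki) hjk
        (u := fun q => ‖q.1‖ ^ 2 • (φ q.2 - m))
        ((measurable_fst.norm.pow_const 2).smul (hgm.comp measurable_snd)) hgm hui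
        ((hY k).integrable (by norm_num))
        (integral_centered hXm hid (hX.integrable (by norm_num)) hφm hφ k)
    simpa only [real_inner_smul_left] using this
  obtain rfl | hki := eq_or_ne k i
  · rw [← key hjk.symm hjk]
    congr 1 with ω
    rw [real_inner_comm]
  · exact key hjk hki

theorem integral_inner_meanDeviation_sq_le (hXm : ∀ i, Measurable (X i))
    (hind : iIndepFun X μ) (hid : ∀ i, IdentDistrib (X i) (X 0) μ μ) (hX : MemLp (X 0) 4 μ)
    (hφm : Measurable φ) (hφ : ∀ v, ‖φ v‖ ≤ ‖v‖) {n i : ℕ} (hi : i < n) :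
    ∫ ω, ⟪X i ω, meanDeviation μ φ X n ω⟫ ^ 2 ∂μ
      ≤ 2 / (n : ℝ) ^ 2 * ∫ ω, ‖X 0 ω‖ ^ 4 ∂μ
        + (4 * n - 2) / (n : ℝ) ^ 2 * (∫ ω, ‖X 0 ω‖ ^ 2 ∂μ) ^ 2 := by
  have hXi : MemLp (X i) 4 μ := (hid i).memLp_iff.2 hX
  have hY := memLp_centered hXm hid hX hφm hφ
  have hD := memLp_meanDeviation hXm hid hX hφm hφ n
  have hint : ∀ j ∈ Finset.range n, ∀ k ∈ Finset.range n,
      Integrable (fun ω => ‖X i ω‖ ^ 2 * ⟪centered μ φ X j ω, centered μ φ X k ω⟫) μ :=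
    fun j _ k _ => integrable_of_norm_le_sq_mul_mul hXi (hY j) (hY k)
      ((hXi.1.norm.pow 2).mul ((hY j).1.inner (hY k).1)) fun ω => by
        rw [norm_mul, norm_pow, norm_norm]
        gcongr
        exact norm_inner_le_norm _ _
  have hsq : ∀ ω, ‖meanDeviation μ φ X n ω‖ ^ 2
      = ((n : ℝ) ^ 2)⁻¹ * ‖∑ j ∈ Finset.range n, centered μ φ X j ω‖ ^ 2 := fun ω => by
    rw [meanDeviation_eq_smul_sum_centered (by omega), norm_smul, mul_pow,
      Real.norm_of_nonneg (by positivity), inv_pow]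
  calc ∫ ω, ⟪X i ω, meanDeviation μ φ X n ω⟫ ^ 2 ∂μ
      ≤ ∫ ω, ‖X i ω‖ ^ 2 * ‖meanDeviation μ φ X n ω‖ ^ 2 ∂μ :=
        integral_mono_of_nonneg (ae_of_all μ fun ω => sq_nonneg _)
          (integrable_of_norm_le_sq_mul_mul hXi hD hD
            ((hXi.1.norm.pow 2).mul (hD.1.norm.pow 2)) fun ω => by
              rw [Real.norm_of_nonneg (by positivity), sq ‖meanDeviation μ φ X n ω‖])
          (ae_of_all μ fun ω => real_inner_sq_le_norm_sq_mul_norm_sq _ _)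
    _ = ((n : ℝ) ^ 2)⁻¹
          * ∑ j ∈ Finset.range n, ∫ ω, ‖X i ω‖ ^ 2 * ‖centered μ φ X j ω‖ ^ 2 ∂μ := by
        simp_rw [hsq, mul_left_comm _ ((n : ℝ) ^ 2)⁻¹]
        rw [integral_const_mul, integral_mul_norm_sq_sum_of_orthogonal _ hint fun j _ k _ hjk =>
          integral_norm_sq_mul_inner_centered_eq_zero hXm hind hid hX hφm hφ i hjk]
    _ ≤ ((n : ℝ) ^ 2)⁻¹
          * (2 * ∫ ω, ‖X 0 ω‖ ^ 4 ∂μ + (4 * n - 2) * (∫ ω, ‖X 0 ω‖ ^ 2 ∂μ) ^ 2) := by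
        gcongr
        exact sum_integral_norm_sq_mul_norm_centered_sq_le hXm hind hid hX hφm hφ hi
    _ = _ := by ring

end SecondMoment

section CrossSum

variable {Ω H E : Type*} [MeasurableSpace Ω] [NormedAddCommGroup H] [InnerProductSpace ℝ H]
  [NormedAddCommGroup E] [NormedSpace ℝ E]

noncomputable def crossSum (μ : Measure Ω) (φ : H → H) (X : ℕ → Ω → H) (Z : ℕ → Ω → E) (n : ℕ)
    (ω : Ω) : E :=
  (n : ℝ)⁻¹ • ∑ i ∈ Finset.range n, ⟪X i ω, meanDeviation μ φ X n ω⟫ • Z i ω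

variable [MeasurableSpace H] [BorelSpace H] [SecondCountableTopology H] [MeasurableSpace E]
  [BorelSpace E] {μ : Measure Ω} [IsProbabilityMeasure μ] {φ : H → H} {X : ℕ → Ω → H}
  {Z : ℕ → Ω → E}

theorem integrable_crossSum (hXm : ∀ i, Measurable (X i))
    (hid : ∀ i, IdentDistrib (X i) (X 0) μ μ) (hX : MemLp (X 0) 4 μ) (hφm : Measurable φ)
    (hφ : ∀ v, ‖φ v‖ ≤ ‖v‖) (hZid : ∀ i, IdentDistrib (Z i) (Z 0) μ μ) (hZ : MemLp (Z 0) 2 μ)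
    (n : ℕ) : Integrable (crossSum μ φ X Z n) μ :=
  integrable_inv_smul_sum_smul (fun i _ => memLp_inner_meanDeviation hXm hid hX hφm hφ i n)
    fun i _ => (hZid i).memLp_iff.2 hZ

theorem integral_norm_crossSum_le [CompleteSpace H] (hXm : ∀ i, Measurable (X i))
    (hind : iIndepFun X μ) (hid : ∀ i, IdentDistrib (X i) (X 0) μ μ) (hX : MemLp (X 0) 4 μ)
    (hφm : Measurable φ) (hφ : ∀ v, ‖φ v‖ ≤ ‖v‖) (hZid : ∀ i, IdentDistrib (Z i) (Z 0) μ μ)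
    (hZ : MemLp (Z 0) 2 μ) (n : ℕ) :
    ∫ ω, ‖crossSum μ φ X Z n ω‖ ∂μ
      ≤ √(2 / (n : ℝ) ^ 2 * ∫ ω, ‖X 0 ω‖ ^ 4 ∂μ
          + (4 * n - 2) / (n : ℝ) ^ 2 * (∫ ω, ‖X 0 ω‖ ^ 2 ∂μ) ^ 2)
        * √(∫ ω, ‖Z 0 ω‖ ^ 2 ∂μ) :=
  integral_norm_inv_smul_sum_smul_le (fun i _ => memLp_inner_meanDeviation hXm hid hX hφm hφ i n)
    (fun i _ => (hZid i).memLp_iff.2 hZ)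
    (fun _ hi => integral_inner_meanDeviation_sq_le hXm hind hid hX hφm hφ hi)
    (fun i _ => (hZid i).norm.pow.integral_eq.le)

end CrossSum

theorem crossTerm_eq_crossSum {Ω : Type*} [MeasureSpace Ω]
    {H : Type*} [NormedAddCommGroup H] [InnerProductSpace ℝ H] [CompleteSpace H]
    {p : ℕ} (X : ℕ → Ω → H) (Z : ℕ → Ω → EuclideanSpace ℝ (Fin p)) (h : H) (x : ℝ) :
    crossTerm X Z h x = crossSum ℙ ({v | ⟪v, h⟫ ≤ x}.indicator id) X Z := by
  funext n ω
  simp only [crossTerm, crossSum, meanDeviation, Set.indicator_apply, Set.mem_ofPred_eq, id]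

/-- For i.i.d. pairs `(X_i, Z_i)` with `E‖X₁‖⁴ < ∞` and `E‖Z₁‖² < ∞`,
the expectation `E‖n⁻¹ ∑ ⟨X_i, X̄_{x,h} − E_{x,h}⟩ Z_i‖` is bounded by
`√((2/n²)E‖X₁‖⁴ + ((4n−2)/n²)(E‖X₁‖²)²) · √(E‖Z₁‖²)`; in particular it tends to `0`,
so the random vector converges to `0` in probability. -/
theorem crossTerm_bound_and_convergence
    {Ω : Type*} [MeasureSpace Ω] [IsProbabilityMeasure (ℙ : Measure Ω)]
    {H : Type*} [NormedAddCommGroup H] [InnerProductSpace ℝ H] [CompleteSpace H]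
    [TopologicalSpace.SeparableSpace H] [MeasurableSpace H] [BorelSpace H]
    {p : ℕ}
    (X : ℕ → Ω → H) (Z : ℕ → Ω → EuclideanSpace ℝ (Fin p))
    (hXmeas : ∀ i, Measurable (X i)) (hZmeas : ∀ i, Measurable (Z i))
    -- the pairs (X_i, Z_i) are independent and identically distributed
    (hindep : iIndepFun (fun i ω => (X i ω, Z i ω)) ℙ)
    (hident : ∀ i, Measure.map (fun ω => (X i ω, Z i ω)) ℙ
        = Measure.map (fun ω => (X 0 ω, Z 0 ω)) ℙ)
    -- E‖X₁‖⁴ < ∞ and E‖Z₁‖² < ∞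
    (hX4 : Integrable (fun ω => ‖X 0 ω‖ ^ 4) ℙ)
    (hZ2 : Integrable (fun ω => ‖Z 0 ω‖ ^ 2) ℙ)
    (h : H) (x : ℝ) :
    (∀ n : ℕ, 1 ≤ n →
      (∫ ω, ‖crossTerm X Z h x n ω‖ ∂ℙ)
        ≤ Real.sqrt ((2 / (n : ℝ) ^ 2) * (∫ ω, ‖X 0 ω‖ ^ 4 ∂ℙ)
              + ((4 * (n : ℝ) - 2) / (n : ℝ) ^ 2) * (∫ ω, ‖X 0 ω‖ ^ 2 ∂ℙ) ^ 2)
          * Real.sqrt (∫ ω, ‖Z 0 ω‖ ^ 2 ∂ℙ)) ∧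
    Tendsto (fun n : ℕ => ∫ ω, ‖crossTerm X Z h x n ω‖ ∂ℙ) atTop (nhds 0) ∧
    TendstoInMeasure ℙ (fun n => crossTerm X Z h x n) atTop
      (fun _ => (0 : EuclideanSpace ℝ (Fin p))) := by
  set φ : H → H := {v | ⟪v, h⟫ ≤ x}.indicator id
  have hφm : Measurable φ :=
    measurable_id.indicator (measurableSet_le (by fun_prop) measurable_const)
  have hφ : ∀ v, ‖φ v‖ ≤ ‖v‖ := fun v => norm_indicator_le_norm_self _ _
  have hW : ∀ i, Measurable fun ω => (X i ω, Z i ω) := fun i => (hXmeas i).prodMk (hZmeas i)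
  have hid : ∀ i, IdentDistrib (fun ω => (X i ω, Z i ω)) (fun ω => (X 0 ω, Z 0 ω)) ℙ ℙ :=
    fun i => ⟨(hW i).aemeasurable, (hW 0).aemeasurable, hident i⟩
  have hXid : ∀ i, IdentDistrib (X i) (X 0) ℙ ℙ := fun i => (hid i).comp measurable_fst
  have hZid : ∀ i, IdentDistrib (Z i) (Z 0) ℙ ℙ := fun i => (hid i).comp measurable_snd
  have hX : MemLp (X 0) 4 ℙ := (integrable_norm_rpow_iff (hXmeas 0).aestronglyMeasurable
    (by norm_num) (by norm_num)).1 (by simpa using hX4)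
  have hZ : MemLp (Z 0) 2 ℙ :=
    (memLp_two_iff_integrable_sq_norm (hZmeas 0).aestronglyMeasurable).2 hZ2
  have hbound := integral_norm_crossSum_le hXmeas
    (hindep.comp (fun _ => Prod.fst) fun _ => measurable_fst) hXid hX hφm hφ hZid hZ
  have hsqrt := ((tendsto_two_div_sq_mul_add_four_mul_sub_two_div_sq_mul (∫ ω, ‖X 0 ω‖ ^ 4 ∂ℙ)
    ((∫ ω, ‖X 0 ω‖ ^ 2 ∂ℙ) ^ 2)).sqrt.mul_const √(∫ ω, ‖Z 0 ω‖ ^ 2 ∂ℙ))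
  rw [Real.sqrt_zero, zero_mul] at hsqrt
  have hlim := squeeze_zero (fun n => integral_nonneg fun ω => norm_nonneg _) hbound hsqrt
  rw [crossTerm_eq_crossSum]
  exact ⟨fun n _ => hbound n, hlim, tendstoInMeasure_zero_of_tendsto_integral_norm
    (integrable_crossSum hXmeas hXid hX hφm hφ hZid hZ) hlim⟩
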